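/- arXiv:1806.04834 — 6 statements merged into one kernel-verified Lean document; each statement's English description precedes it below -/
import Mathlib

section
/- Let C be the additive code with check matrix (A | A' | A'') in the group G = (ℤ/4)^{2m} × (ℤ/2)^{2n'} × (ℤ/4)^{n''} equipped with the Doob graph D(m, n'+n''). Then C is a 1-perfect code in D(m, n'+n'') if and only if the matrix (A | A' | A'') has no all-zero column and every nonzero syndrome in the set {syndrome of z : z ∈ G} is the syndrome of exactly one weight-1 element of G. -/
open Matrix Polynomial Finset

/-- Vertex set of the Doob graph `D(m, n'+n'')`. -/
abbrev DoobV (m n' n'' : ℕ) : Type :=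
  (Fin (2*m) → ZMod 4) × (Fin (2*n') → ZMod 2) × (Fin n'' → ZMod 4)

/-- Connecting set of the Shrikhande graph as a Cayley graph on `(ℤ/4)²`. -/
def shrGen : Set (ZMod 4 × ZMod 4) :=
  {(0,1), (3,0), (3,3), (0,3), (1,0), (1,1)}

/-- Connecting set of `K₄` as a Cayley graph on `(ℤ/2)²`. -/
def k4Gen : Set (ZMod 2 × ZMod 2) :=
  {(0,1), (1,0), (1,1)}

/-- `e` is a weight-1 element of `DoobV m n' n''`. -/
def IsWeightOne {m n' n'' : ℕ} (e : DoobV m n' n'') : Prop :=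
  (∃ i : Fin m,
    (e.1 ⟨2*i.1, by have := i.2; omega⟩, e.1 ⟨2*i.1+1, by have := i.2; omega⟩) ∈ shrGen ∧
    (∀ j : Fin (2*m), j.1 ≠ 2*i.1 → j.1 ≠ 2*i.1+1 → e.1 j = 0) ∧
    e.2.1 = 0 ∧ e.2.2 = 0) ∨
  (∃ i : Fin n',
    (e.2.1 ⟨2*i.1, by have := i.2; omega⟩, e.2.1 ⟨2*i.1+1, by have := i.2; omega⟩) ∈ k4Gen ∧
    (∀ j : Fin (2*n'), j.1 ≠ 2*i.1 → j.1 ≠ 2*i.1+1 → e.2.1 j = 0) ∧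
    e.1 = 0 ∧ e.2.2 = 0) ∨
  (∃ i : Fin n'',
    e.2.2 i ≠ 0 ∧ (∀ j : Fin n'', j ≠ i → e.2.2 j = 0) ∧
    e.1 = 0 ∧ e.2.1 = 0)

/-- `C` is a 1-perfect code in the Doob graph `D(m, n'+n'')`: every vertex is at graph
distance at most 1 from exactly one element of `C`. -/
def IsPerfectCode {m n' n'' : ℕ} (C : Set (DoobV m n' n'')) : Prop :=
  ∀ v : DoobV m n' n'', ∃! c : DoobV m n' n'', c ∈ C ∧ (v = c ∨ IsWeightOne (v - c))

/-- The coordinatewise homomorphism `ℤ/2 → ℤ/4` sending `1` to `2`. -/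
def z2toZ4 (b : ZMod 2) : ZMod 4 := 2 * (b.val : ZMod 4)

/-- Syndrome of `z` with respect to the check matrix `(A | A' | A'')`:
`A z₁ᵀ + 2·(A' z₂ᵀ) + A'' z₃ᵀ`. -/
def syndrome {k m n' n'' : ℕ}
    (A : Matrix (Fin k) (Fin (2*m)) (ZMod 4))
    (A' : Matrix (Fin k) (Fin (2*n')) (ZMod 2))
    (A'' : Matrix (Fin k) (Fin n'') (ZMod 4))
    (z : DoobV m n' n'') : Fin k → ZMod 4 :=
  A.mulVec z.1 + (fun i => z2toZ4 (A'.mulVec z.2.1 i)) + A''.mulVec z.2.2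

/-- The additive code with check matrix `(A | A' | A'')`. -/
def codeOf {k m n' n'' : ℕ}
    (A : Matrix (Fin k) (Fin (2*m)) (ZMod 4))
    (A' : Matrix (Fin k) (Fin (2*n')) (ZMod 2))
    (A'' : Matrix (Fin k) (Fin n'') (ZMod 4)) : Set (DoobV m n' n'') :=
  {z | syndrome A A' A'' z = 0}

/- ===================== auxiliary lemmas ===================== -/

lemma z2_zero : z2toZ4 0 = 0 := by decide
lemma z2_sub : ∀ a b : ZMod 2, z2toZ4 (a - b) = z2toZ4 a - z2toZ4 b := by decide
lemma z2_eq_zero : ∀ a : ZMod 2, z2toZ4 a = 0 ↔ a = 0 := by decide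
lemma zmod4_mul3 : ∀ x : ZMod 4, x * 3 = 0 → x = 0 := by decide
lemma zmod4_sum3 : ∀ x y : ZMod 4, x * 3 + y * 3 = 0 → x + y = 0 := by decide
lemma zmod4_neg3 : ∀ x y : ZMod 4, x + y = 0 → y * 3 = x * 1 := by decide
lemma zmod4_two : ∀ x : ZMod 4, x * 2 = 0 → x * 3 = x * 1 := by decide
lemma zmod4_cases : ∀ a : ZMod 4, a = 0 ∨ a = 1 ∨ a = 2 ∨ a = 3 := by decide
lemma zmod2_sum : ∀ x y : ZMod 2, x + y = 0 → y = x := by decide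

section Aux

variable {k m n' n'' : ℕ}
    (A : Matrix (Fin k) (Fin (2*m)) (ZMod 4))
    (A' : Matrix (Fin k) (Fin (2*n')) (ZMod 2))
    (A'' : Matrix (Fin k) (Fin n'' ) (ZMod 4))

lemma syn_sub (x y : DoobV m n' n'') :
    syndrome A A' A'' (x - y) = syndrome A A' A'' x - syndrome A A' A'' y := by
  funext r
  have h1 : (x - y).1 = x.1 - y.1 := rfl
  have h2 : (x - y).2.1 = x.2.1 - y.2.1 := rfl
  have h3 : (x - y).2.2 = x.2.2 - y.2.2 := rfl
  simp only [syndrome, Pi.add_apply, Pi.sub_apply, h1, h2, h3, Matrix.mulVec_sub, z2_sub]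
  ring

lemma syn_zero : syndrome A A' A'' (0 : DoobV m n' n'') = 0 := by
  funext r
  simp [syndrome, z2_zero]

/-- first-block single. -/
def eF (j : Fin (2*m)) (a : ZMod 4) : DoobV m n' n'' := (Pi.single j a, 0, 0)
/-- second-block single. -/
def eS (j : Fin (2*n')) (a : ZMod 2) : DoobV m n' n'' := (0, Pi.single j a, 0)
/-- third-block single. -/
def eT (j : Fin n'') (a : ZMod 4) : DoobV m n' n'' := (0, 0, Pi.single j a)

lemma syn_eF (j : Fin (2*m)) (a : ZMod 4) :
    syndrome A A' A'' (eF (n' := n') (n'' := n'') j a) = fun r => A r j * a := by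
  funext r; simp [eF, syndrome, Matrix.mulVec_single, z2_zero]; ring

lemma syn_eS (j : Fin (2*n')) (a : ZMod 2) :
    syndrome A A' A'' (eS (m := m) (n'' := n'') j a) = fun r => z2toZ4 (A' r j * a) := by
  funext r; simp [eS, syndrome, Matrix.mulVec_single, z2_zero]

lemma syn_eT (j : Fin n'') (a : ZMod 4) :
    syndrome A A' A'' (eT (m := m) (n' := n') j a) = fun r => A'' r j * a := by
  funext r; simp [eT, syndrome, Matrix.mulVec_single, z2_zero]; ring

lemma pair_single_mem_shr {N : ℕ} (j x y : Fin N) (a : ZMod 4) (ha : a = 1 ∨ a = 3)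
    (h : (x = j ∧ y ≠ j) ∨ (x ≠ j ∧ y = j)) :
    (Pi.single (M := fun _ => ZMod 4) j a x, Pi.single (M := fun _ => ZMod 4) j a y) ∈ shrGen := by
  rcases h with ⟨rfl, hy⟩ | ⟨hx, rfl⟩
  · rw [Pi.single_eq_same, Pi.single_eq_of_ne hy]
    rcases ha with rfl | rfl <;> simp [shrGen]
  · rw [Pi.single_eq_same, Pi.single_eq_of_ne hx]
    rcases ha with rfl | rfl <;> simp [shrGen]

lemma pair_single_mem_k4 {N : ℕ} (j x y : Fin N)
    (h : (x = j ∧ y ≠ j) ∨ (x ≠ j ∧ y = j)) :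
    (Pi.single (M := fun _ => ZMod 2) j 1 x, Pi.single (M := fun _ => ZMod 2) j 1 y) ∈ k4Gen := by
  rcases h with ⟨rfl, hy⟩ | ⟨hx, rfl⟩
  · rw [Pi.single_eq_same, Pi.single_eq_of_ne hy]
    simp [k4Gen]
  · rw [Pi.single_eq_same, Pi.single_eq_of_ne hx]
    simp [k4Gen]

lemma wt1_eF (j : Fin (2*m)) (a : ZMod 4) (ha : a = 1 ∨ a = 3) :
    IsWeightOne (eF (n' := n') (n'' := n'') j a) := by
  left
  refine ⟨⟨j.1 / 2, by have := j.2; omega⟩, ?_, ?_, rfl, rfl⟩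
  · simp only [eF]
    by_cases hpar : j.1 % 2 = 0
    · exact pair_single_mem_shr j _ ⟨2*(j.1/2)+1, by have := j.2; omega⟩ a ha
        (Or.inl ⟨Fin.ext (show 2*(j.1/2) = j.1 by omega),
          Fin.ne_of_val_ne (show 2*(j.1/2)+1 ≠ j.1 by omega)⟩)
    · exact pair_single_mem_shr j _ ⟨2*(j.1/2)+1, by have := j.2; omega⟩ a ha
        (Or.inr ⟨Fin.ne_of_val_ne (show 2*(j.1/2) ≠ j.1 by omega),
          Fin.ext (show 2*(j.1/2)+1 = j.1 by omega)⟩)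
  · intro j' h1 h2
    have h1' : j'.1 ≠ 2*(j.1/2) := h1
    have h2' : j'.1 ≠ 2*(j.1/2)+1 := h2
    simp only [eF]
    exact Pi.single_eq_of_ne (Fin.ne_of_val_ne (by omega)) _

lemma wt1_eS (j : Fin (2*n')) :
    IsWeightOne (eS (m := m) (n'' := n'') j 1) := by
  right; left
  refine ⟨⟨j.1 / 2, by have := j.2; omega⟩, ?_, ?_, rfl, rfl⟩
  · simp only [eS]
    by_cases hpar : j.1 % 2 = 0
    · exact pair_single_mem_k4 j _ ⟨2*(j.1/2)+1, by have := j.2; omega⟩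
        (Or.inl ⟨Fin.ext (show 2*(j.1/2) = j.1 by omega),
          Fin.ne_of_val_ne (show 2*(j.1/2)+1 ≠ j.1 by omega)⟩)
    · exact pair_single_mem_k4 j _ ⟨2*(j.1/2)+1, by have := j.2; omega⟩
        (Or.inr ⟨Fin.ne_of_val_ne (show 2*(j.1/2) ≠ j.1 by omega),
          Fin.ext (show 2*(j.1/2)+1 = j.1 by omega)⟩)
  · intro j' h1 h2
    have h1' : j'.1 ≠ 2*(j.1/2) := h1
    have h2' : j'.1 ≠ 2*(j.1/2)+1 := h2
    simp only [eS]
    exact Pi.single_eq_of_ne (Fin.ne_of_val_ne (by omega)) _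

lemma wt1_eT (j : Fin n'') (a : ZMod 4) (ha : a ≠ 0) :
    IsWeightOne (eT (m := m) (n' := n') j a) := by
  right; right
  refine ⟨j, ?_, ?_, rfl, rfl⟩
  · simp only [eT]
    rwa [Pi.single_eq_same]
  · intro j' hj'
    simp only [eT]
    exact Pi.single_eq_of_ne hj' _

lemma wt1_ne_zero (e : DoobV m n' n'') (h : IsWeightOne e) : e ≠ 0 := by
  rintro rfl
  rcases h with ⟨i, hp, -⟩ | ⟨i, hp, -⟩ | ⟨i, hp, -⟩
  · have h0 : ((0 : ZMod 4), (0 : ZMod 4)) ∈ shrGen := hp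
    simp only [shrGen, Set.mem_insert_iff, Set.mem_singleton_iff, Prod.ext_iff] at h0
    revert h0; decide
  · have h0 : ((0 : ZMod 2), (0 : ZMod 2)) ∈ k4Gen := hp
    simp only [k4Gen, Set.mem_insert_iff, Set.mem_singleton_iff, Prod.ext_iff] at h0
    revert h0; decide
  · exact hp rfl

/-- Two distinct weight-one words with equal nonzero syndromes contradict uniqueness. -/
lemma distinct_contra
    (hU : ∀ z : DoobV m n' n'', syndrome A A' A'' z ≠ 0 →
      ∃! e : DoobV m n' n'', IsWeightOne e ∧ syndrome A A' A'' e = syndrome A A' A'' z)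
    (e₁ e₂ : DoobV m n' n'') (h1 : IsWeightOne e₁) (h2 : IsWeightOne e₂)
    (hne : e₁ ≠ e₂) (hsyn : syndrome A A' A'' e₁ = syndrome A A' A'' e₂)
    (hnz : syndrome A A' A'' e₁ ≠ 0) : False := by
  obtain ⟨w, -, hu⟩ := hU e₁ hnz
  exact hne ((hu e₁ ⟨h1, rfl⟩).trans (hu e₂ ⟨h2, hsyn.symm⟩).symm)

/-- Under the right-hand conditions, no weight-one word has zero syndrome. -/
lemma wt1_syn_ne_zero
    (hA : ∀ j, ∃ i, A i j ≠ 0) (hA' : ∀ j, ∃ i, A' i j ≠ 0) (hA'' : ∀ j, ∃ i, A'' i j ≠ 0)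
    (hU : ∀ z : DoobV m n' n'', syndrome A A' A'' z ≠ 0 →
      ∃! e : DoobV m n' n'', IsWeightOne e ∧ syndrome A A' A'' e = syndrome A A' A'' z)
    (e : DoobV m n' n'') (he : IsWeightOne e) : syndrome A A' A'' e ≠ 0 := by
  intro hs
  obtain ⟨e1, e2, e3⟩ := e
  rcases he with ⟨i, hp, hz, h21, h22⟩ | ⟨i, hp, hz, h21, h22⟩ | ⟨i, hne0, hz, h21, h22⟩
  · -- first block
    simp only at hp hz h21 h22
    subst h21 h22
    set j1 : Fin (2*m) := ⟨2*i.1, by have := i.2; omega⟩ with hj1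
    set j2 : Fin (2*m) := ⟨2*i.1+1, by have := i.2; omega⟩ with hj2
    set a := e1 j1 with hadef
    set b := e1 j2 with hbdef
    have hj12 : j1 ≠ j2 := Fin.ne_of_val_ne (show 2*i.1 ≠ 2*i.1+1 by omega)
    have he1 : e1 = Pi.single j1 a + Pi.single j2 b := by
      funext j
      by_cases hx1 : j = j1
      · subst hx1
        rw [Pi.add_apply, Pi.single_eq_same, Pi.single_eq_of_ne hj12, add_zero]
      · by_cases hx2 : j = j2
        · subst hx2
          rw [Pi.add_apply, Pi.single_eq_same, Pi.single_eq_of_ne (Ne.symm hj12), zero_add]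
        · rw [Pi.add_apply, Pi.single_eq_of_ne hx1, Pi.single_eq_of_ne hx2, add_zero]
          exact hz j (fun h => hx1 (Fin.ext h)) (fun h => hx2 (Fin.ext h))
    have hsr : ∀ r, A r j1 * a + A r j2 * b = 0 := by
      intro r
      have := congrFun hs r
      simpa [syndrome, he1, Matrix.mulVec_add, Matrix.mulVec_single, z2_zero, mul_comm] using this
    have hp' : (a, b) ∈ shrGen := hp
    simp only [shrGen, Set.mem_insert_iff, Set.mem_singleton_iff, Prod.ext_iff] at hp'
    have hcol : ∀ r, A r j1 + A r j2 = 0 := by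
      rcases hp' with ⟨ha, hb⟩ | ⟨ha, hb⟩ | ⟨ha, hb⟩ | ⟨ha, hb⟩ | ⟨ha, hb⟩ | ⟨ha, hb⟩
      · exfalso
        obtain ⟨r, hr⟩ := hA j2
        apply hr
        have h := hsr r; rw [ha, hb] at h; simpa using h
      · exfalso
        obtain ⟨r, hr⟩ := hA j1
        apply hr
        apply zmod4_mul3
        have h := hsr r; rw [ha, hb] at h; simpa using h
      · intro r
        apply zmod4_sum3
        have h := hsr r; rw [ha, hb] at h; simpa using h
      · exfalso
        obtain ⟨r, hr⟩ := hA j2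
        apply hr
        apply zmod4_mul3
        have h := hsr r; rw [ha, hb] at h; simpa using h
      · exfalso
        obtain ⟨r, hr⟩ := hA j1
        apply hr
        have h := hsr r; rw [ha, hb] at h; simpa using h
      · intro r
        have h := hsr r; rw [ha, hb] at h; simpa using h
    -- contradiction with two distinct weight-one words of equal nonzero syndrome
    obtain ⟨r0, hr0⟩ := hA j1
    refine distinct_contra A A' A'' hU (eF j1 1) (eF j2 3)
      (wt1_eF j1 1 (Or.inl rfl)) (wt1_eF j2 3 (Or.inr rfl)) ?_ ?_ ?_
    · intro h
      have h' := congrArg (fun x => x.1 j1) h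
      simp only [eF] at h'
      rw [Pi.single_eq_same, Pi.single_eq_of_ne hj12] at h'
      revert h'; decide
    · rw [syn_eF, syn_eF]
      funext r
      exact (zmod4_neg3 _ _ (hcol r)).symm
    · rw [syn_eF]
      intro h
      have h' := congrFun h r0
      simp only [Pi.zero_apply, mul_one] at h'
      exact hr0 h'
  · -- second block
    simp only at hp hz h21 h22
    subst h21 h22
    set j1 : Fin (2*n') := ⟨2*i.1, by have := i.2; omega⟩ with hj1
    set j2 : Fin (2*n') := ⟨2*i.1+1, by have := i.2; omega⟩ with hj2
    set a := e2 j1 with hadef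
    set b := e2 j2 with hbdef
    have hj12 : j1 ≠ j2 := Fin.ne_of_val_ne (show 2*i.1 ≠ 2*i.1+1 by omega)
    have he2 : e2 = Pi.single j1 a + Pi.single j2 b := by
      funext j
      by_cases hx1 : j = j1
      · subst hx1
        rw [Pi.add_apply, Pi.single_eq_same, Pi.single_eq_of_ne hj12, add_zero]
      · by_cases hx2 : j = j2
        · subst hx2
          rw [Pi.add_apply, Pi.single_eq_same, Pi.single_eq_of_ne (Ne.symm hj12), zero_add]
        · rw [Pi.add_apply, Pi.single_eq_of_ne hx1, Pi.single_eq_of_ne hx2, add_zero]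
          exact hz j (fun h => hx1 (Fin.ext h)) (fun h => hx2 (Fin.ext h))
    have hsr : ∀ r, A' r j1 * a + A' r j2 * b = 0 := by
      intro r
      have h := congrFun hs r
      rw [← z2_eq_zero]
      simpa [syndrome, he2, Matrix.mulVec_add, Matrix.mulVec_single, Matrix.mulVec_zero, mul_comm]
        using h
    have hp' : (a, b) ∈ k4Gen := hp
    simp only [k4Gen, Set.mem_insert_iff, Set.mem_singleton_iff, Prod.ext_iff] at hp'
    have hcol : ∀ r, A' r j2 = A' r j1 := by
      rcases hp' with ⟨ha, hb⟩ | ⟨ha, hb⟩ | ⟨ha, hb⟩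
      · exfalso
        obtain ⟨r, hr⟩ := hA' j2
        apply hr
        have h := hsr r; rw [ha, hb] at h; simpa using h
      · exfalso
        obtain ⟨r, hr⟩ := hA' j1
        apply hr
        have h := hsr r; rw [ha, hb] at h; simpa using h
      · intro r
        apply zmod2_sum
        have h := hsr r; rw [ha, hb] at h; simpa using h
    obtain ⟨r0, hr0⟩ := hA' j1
    refine distinct_contra A A' A'' hU (eS j1 1) (eS j2 1)
      (wt1_eS j1) (wt1_eS j2) ?_ ?_ ?_
    · intro h
      have h' := congrArg (fun x => x.2.1 j1) h
      simp only [eS] at h'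
      rw [Pi.single_eq_same, Pi.single_eq_of_ne hj12] at h'
      revert h'; decide
    · rw [syn_eS, syn_eS]
      funext r
      rw [hcol r]
    · rw [syn_eS]
      intro h
      have h' := congrFun h r0
      simp only [Pi.zero_apply, mul_one] at h'
      exact hr0 ((z2_eq_zero _).1 h')
  · -- third block
    simp only at hne0 hz h21 h22
    subst h21 h22
    set a := e3 i with hadef
    have he3 : e3 = Pi.single i a := by
      funext j
      by_cases hx : j = i
      · subst hx; rw [Pi.single_eq_same]
      · rw [Pi.single_eq_of_ne hx]; exact hz j hx
    have hsr : ∀ r, A'' r i * a = 0 := by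
      intro r
      have h := congrFun hs r
      simpa [syndrome, he3, Matrix.mulVec_single, z2_zero, mul_comm] using h
    rcases zmod4_cases a with ha | ha | ha | ha
    · exact hne0 ha
    · obtain ⟨r, hr⟩ := hA'' i
      apply hr
      have h := hsr r; rw [ha] at h; simpa using h
    · -- a = 2 : two distinct words with equal syndrome
      obtain ⟨r0, hr0⟩ := hA'' i
      refine distinct_contra A A' A'' hU (eT i 1) (eT i 3)
        (wt1_eT i 1 (by decide)) (wt1_eT i 3 (by decide)) ?_ ?_ ?_
      · intro h
        have h' := congrArg (fun x => x.2.2 i) h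
        simp only [eT, Pi.single_eq_same] at h'
        revert h'; decide
      · rw [syn_eT, syn_eT]
        funext r
        have h2 : A'' r i * 2 = 0 := by have h := hsr r; rwa [ha] at h
        rw [mul_one]
        have h3 := zmod4_two _ h2
        rw [h3, mul_one]
      · rw [syn_eT]
        intro h
        have h' := congrFun h r0
        simp only [Pi.zero_apply, mul_one] at h'
        exact hr0 h'
    · obtain ⟨r, hr⟩ := hA'' i
      apply hr
      apply zmod4_mul3
      have h := hsr r; rwa [ha] at h

lemma perfect_iff :
    IsPerfectCode (codeOf A A' A'') ↔
      ∀ v : DoobV m n' n'', ∃! e : DoobV m n' n'',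
        (e = 0 ∨ IsWeightOne e) ∧ syndrome A A' A'' e = syndrome A A' A'' v := by
  constructor
  · intro H v
    obtain ⟨c, ⟨hcC, hcd⟩, hcu⟩ := H v
    have hcC' : syndrome A A' A'' c = 0 := hcC
    refine ⟨v - c, ⟨?_, ?_⟩, ?_⟩
    · rcases hcd with h | h
      · left; rw [h, sub_self]
      · right; exact h
    · rw [syn_sub, hcC', sub_zero]
    · rintro e ⟨hd, hsyn⟩
      have hc' : (v - e) ∈ codeOf A A' A'' := by
        show syndrome A A' A'' (v - e) = 0
        rw [syn_sub, hsyn, sub_self]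
      have hkey : v - e = c := by
        apply hcu
        refine ⟨hc', ?_⟩
        rcases hd with rfl | h
        · left; rw [sub_zero]
        · right; rwa [sub_sub_cancel]
      have := congrArg (fun x => v - x) hkey
      simpa [sub_sub_cancel] using this
  · intro H v
    obtain ⟨e, ⟨hd, hsyn⟩, heu⟩ := H v
    refine ⟨v - e, ⟨?_, ?_⟩, ?_⟩
    · show syndrome A A' A'' (v - e) = 0
      rw [syn_sub, hsyn, sub_self]
    · rcases hd with rfl | h
      · left; rw [sub_zero]
      · right; rwa [sub_sub_cancel]
    · rintro c ⟨hcC, hcd⟩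
      have hcC' : syndrome A A' A'' c = 0 := hcC
      have hkey : v - c = e := by
        apply heu
        constructor
        · rcases hcd with h | h
          · left; rw [← h, sub_self]
          · right; exact h
        · rw [syn_sub, hcC', sub_zero]
      have := congrArg (fun x => v - x) hkey
      simpa [sub_sub_cancel] using this

end Aux

/-- the additive code with check matrix `(A | A' | A'')` is 1-perfect iff the
matrix has no all-zero column and every nonzero syndrome occurring as the syndrome of some
element of `G` is the syndrome of exactly one weight-1 element of `G`. -/
theorem statement0 {k m n' n'' : ℕ}
    (A : Matrix (Fin k) (Fin (2*m)) (ZMod 4))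
    (A' : Matrix (Fin k) (Fin (2*n')) (ZMod 2))
    (A'' : Matrix (Fin k) (Fin n'') (ZMod 4)) :
    IsPerfectCode (codeOf A A' A'') ↔
      ((∀ j, ∃ i, A i j ≠ 0) ∧ (∀ j, ∃ i, A' i j ≠ 0) ∧ (∀ j, ∃ i, A'' i j ≠ 0) ∧
        ∀ z : DoobV m n' n'', syndrome A A' A'' z ≠ 0 →
          ∃! e : DoobV m n' n'',
            IsWeightOne e ∧ syndrome A A' A'' e = syndrome A A' A'' z) := by
  rw [perfect_iff]
  constructor
  · intro H
    have key : ∀ e : DoobV m n' n'', IsWeightOne e → syndrome A A' A'' e = 0 → False := by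
      intro e he h0
      obtain ⟨w, -, hu⟩ := H 0
      have h1 : e = w := hu e ⟨Or.inr he, by rw [h0, syn_zero]⟩
      have h2 : (0 : DoobV m n' n'') = w := hu 0 ⟨Or.inl rfl, rfl⟩
      exact wt1_ne_zero e he (h1.trans h2.symm)
    refine ⟨?_, ?_, ?_, ?_⟩
    · intro j
      by_contra hc
      push_neg at hc
      refine key (eF j 1) (wt1_eF j 1 (Or.inl rfl)) ?_
      rw [syn_eF]
      funext r
      simp [hc r]
    · intro j
      by_contra hc
      push_neg at hc
      refine key (eS j 1) (wt1_eS j) ?_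
      rw [syn_eS]
      funext r
      simp [hc r, z2_zero]
    · intro j
      by_contra hc
      push_neg at hc
      refine key (eT j 1) (wt1_eT j 1 (by decide)) ?_
      rw [syn_eT]
      funext r
      simp [hc r]
    · intro z hz
      obtain ⟨e, ⟨hd, hsyn⟩, hu⟩ := H z
      have hwt : IsWeightOne e := by
        rcases hd with rfl | h
        · exfalso; apply hz; rw [← hsyn, syn_zero]
        · exact h
      exact ⟨e, ⟨hwt, hsyn⟩, fun e' ⟨hw', hs'⟩ => hu e' ⟨Or.inr hw', hs'⟩⟩
  · rintro ⟨hA, hA', hA'', hU⟩ v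
    have key := wt1_syn_ne_zero A A' A'' hA hA' hA'' hU
    by_cases hv : syndrome A A' A'' v = 0
    · refine ⟨0, ⟨Or.inl rfl, by rw [syn_zero, hv]⟩, ?_⟩
      rintro e ⟨(rfl | hw), hs⟩
      · rfl
      · exact absurd (hs.trans hv) (key e hw)
    · obtain ⟨e, ⟨hw, hs⟩, hu⟩ := hU v hv
      refine ⟨e, ⟨Or.inr hw, hs⟩, ?_⟩
      rintro e' ⟨(rfl | hw'), hs'⟩
      · exact absurd (syn_zero A A' A'' ▸ hs'.symm) hv
      · exact hu e' ⟨hw', hs'⟩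
end

section
/- Let (A1 | A2 | A3) be the 3×22 matrix with rows (1,0,2,2,0,1,1,2,2,1,2,3,1,1,1,0 | 1,0 | 1,0,0,1), (0,1,1,0,2,2,2,3,1,2,2,1,2,1,3,1 | 1,1 | 0,1,0,1), (2,2,0,1,1,0,2,1,2,3,1,2,1,2,0,3 | 0,1 | 0,0,1,1), where the first 16 columns are over ℤ/4, the next 2 columns are over ℤ/2, and the last 4 columns are over ℤ/4. Then the additive code with check matrix (A1 | A2 | A3) in (ℤ/4)^{16} × (ℤ/2)^{2} × (ℤ/4)^{4} is a 1-perfect code in the Doob graph D(8, 1+4). -/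
open Matrix Polynomial Finset

/-- The `ℤ/4`-part (first 16 columns) of the check matrix of Section 3.1. -/
def A1 : Matrix (Fin 3) (Fin (2*8)) (ZMod 4) :=
  !![1,0,2,2,0,1,1,2,2,1,2,3,1,1,1,0;
     0,1,1,0,2,2,2,3,1,2,2,1,2,1,3,1;
     2,2,0,1,1,0,2,1,2,3,1,2,1,2,0,3]

/-- The `ℤ/2`-part (next 2 columns) of the check matrix of Section 3.1. -/
def A2 : Matrix (Fin 3) (Fin (2*1)) (ZMod 2) :=
  !![1,0;
     1,1;
     0,1]

/-- The last 4 columns (over `ℤ/4`) of the check matrix of Section 3.1. -/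
def A3 : Matrix (Fin 3) (Fin 4) (ZMod 4) :=
  !![1,0,0,1;
     0,1,0,1;
     0,0,1,1]

section Aux

/-- Weight-1 element supported on Shrikhande pair `i`. -/
def e1 (i : Fin 8) (g : ZMod 4 × ZMod 4) : DoobV 8 1 4 :=
  ((fun j => if j.1 = 2*i.1 then g.1 else if j.1 = 2*i.1+1 then g.2 else 0), 0, 0)

/-- Weight-1 element supported on the `K₄` pair. -/
def e2 (g : ZMod 2 × ZMod 2) : DoobV 8 1 4 :=
  (0, (fun j => if j.1 = 0 then g.1 else g.2), 0)

/-- Weight-1 element supported on Hamming coordinate `i`. -/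
def e3 (i : Fin 4) (a : ZMod 4) : DoobV 8 1 4 :=
  (0, 0, fun j => if j = i then a else 0)

def shrList : List (ZMod 4 × ZMod 4) := [(0,1),(3,0),(3,3),(0,3),(1,0),(1,1)]
def k4List : List (ZMod 2 × ZMod 2) := [(0,1),(1,0),(1,1)]

/-- All weight-≤1 elements of `DoobV 8 1 4`. -/
def keyElems : List (DoobV 8 1 4) :=
  0 :: (((List.finRange 8).flatMap fun i => shrList.map (e1 i))
    ++ (k4List.map e2)
    ++ ((List.finRange 4).flatMap fun i => ([1,2,3] : List (ZMod 4)).map (e3 i)))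

set_option maxRecDepth 10000 in
theorem fact1 : ∀ s : Fin 3 → ZMod 4, ∃ e ∈ keyElems, syndrome A1 A2 A3 e = s := by decide

set_option maxRecDepth 10000 in
theorem fact2 : ∀ e ∈ keyElems, ∀ e' ∈ keyElems,
    syndrome A1 A2 A3 e = syndrome A1 A2 A3 e' → e = e' := by decide

lemma shr_iff (p : ZMod 4 × ZMod 4) : p ∈ shrGen ↔ p ∈ shrList := by
  constructor <;> intro h <;> simp_all [shrGen, shrList]

lemma k4_iff (p : ZMod 2 × ZMod 2) : p ∈ k4Gen ↔ p ∈ k4List := by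
  constructor <;> intro h <;> simp_all [k4Gen, k4List]

lemma e1_mem (i : Fin 8) {g : ZMod 4 × ZMod 4} (hg : g ∈ shrList) : e1 i g ∈ keyElems := by
  refine List.mem_cons_of_mem _ (List.mem_append_left _ (List.mem_append_left _ ?_))
  exact List.mem_flatMap.2 ⟨i, List.mem_finRange i, List.mem_map_of_mem (f := e1 i) hg⟩

lemma e2_mem {g : ZMod 2 × ZMod 2} (hg : g ∈ k4List) : e2 g ∈ keyElems := by
  refine List.mem_cons_of_mem _ (List.mem_append_left _ (List.mem_append_right _ ?_))
  exact List.mem_map_of_mem (f := e2) hg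

lemma e3_mem (i : Fin 4) {a : ZMod 4} (ha : a ∈ ([1,2,3] : List (ZMod 4))) :
    e3 i a ∈ keyElems := by
  refine List.mem_cons_of_mem _ (List.mem_append_right _ ?_)
  exact List.mem_flatMap.2 ⟨i, List.mem_finRange i, List.mem_map_of_mem (f := e3 i) ha⟩

lemma eq_e1 (e : DoobV 8 1 4) (i : Fin 8)
    (hz : ∀ j : Fin (2*8), j.1 ≠ 2*i.1 → j.1 ≠ 2*i.1+1 → e.1 j = 0)
    (h2 : e.2.1 = 0) (h3 : e.2.2 = 0) :
    e = e1 i (e.1 ⟨2*i.1, by have := i.2; omega⟩, e.1 ⟨2*i.1+1, by have := i.2; omega⟩) := by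
  obtain ⟨a, b, c⟩ := e
  refine Prod.ext ?_ (Prod.ext h2 h3)
  funext j
  show a j = if j.1 = 2*i.1 then _ else if j.1 = 2*i.1+1 then _ else 0
  split_ifs with hj1 hj2
  · exact congrArg a (Fin.ext hj1)
  · exact congrArg a (Fin.ext hj2)
  · exact hz j hj1 hj2

lemma eq_e2 (e : DoobV 8 1 4) (h1 : e.1 = 0) (h3 : e.2.2 = 0) :
    e = e2 (e.2.1 ⟨0, by omega⟩, e.2.1 ⟨1, by omega⟩) := by
  obtain ⟨a, b, c⟩ := e
  refine Prod.ext h1 (Prod.ext ?_ h3)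
  funext j
  show b j = if j.1 = 0 then _ else _
  split_ifs with hj
  · exact congrArg b (Fin.ext hj)
  · have hj1 : j.1 = 1 := by have := j.2; omega
    exact congrArg b (Fin.ext hj1)

lemma eq_e3 (e : DoobV 8 1 4) (i : Fin 4)
    (hz : ∀ j : Fin 4, j ≠ i → e.2.2 j = 0)
    (h1 : e.1 = 0) (h2 : e.2.1 = 0) :
    e = e3 i (e.2.2 i) := by
  obtain ⟨a, b, c⟩ := e
  refine Prod.ext h1 (Prod.ext h2 ?_)
  funext j
  show c j = if j = i then _ else 0
  split_ifs with hj
  · exact congrArg c hj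
  · exact hz j hj

lemma wt1_e1 (i : Fin 8) {g : ZMod 4 × ZMod 4} (hg : g ∈ shrList) : IsWeightOne (e1 i g) := by
  left
  refine ⟨i, ?_, ?_, rfl, rfl⟩
  · have ha : (e1 i g).1 ⟨2*i.1, by have := i.2; omega⟩ = g.1 := by
      show (if 2*i.1 = 2*i.1 then _ else _) = g.1
      rw [if_pos rfl]
    have hb : (e1 i g).1 ⟨2*i.1+1, by have := i.2; omega⟩ = g.2 := by
      show (if 2*i.1+1 = 2*i.1 then _ else _) = g.2
      rw [if_neg (by omega), if_pos rfl]
    rw [ha, hb]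
    exact (shr_iff g).2 hg
  · intro j hj1 hj2
    show (if j.1 = 2*i.1 then _ else if j.1 = 2*i.1+1 then _ else 0) = 0
    rw [if_neg hj1, if_neg hj2]

lemma wt1_e2 {g : ZMod 2 × ZMod 2} (hg : g ∈ k4List) : IsWeightOne (e2 g) := by
  right; left
  refine ⟨0, ?_, ?_, rfl, rfl⟩
  · exact (k4_iff g).2 hg
  · intro j hj1 hj2
    exfalso
    have h2 : j.1 < 2 := j.2
    have h0 : (0 : Fin 1).1 = 0 := rfl
    omega

lemma wt1_e3 (i : Fin 4) {a : ZMod 4} (ha : a ∈ ([1,2,3] : List (ZMod 4))) :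
    IsWeightOne (e3 i a) := by
  right; right
  refine ⟨i, ?_, ?_, rfl, rfl⟩
  · show (if i = i then a else 0) ≠ 0
    rw [if_pos rfl]
    have : ∀ a : ZMod 4, a ∈ ([1,2,3] : List (ZMod 4)) → a ≠ 0 := by decide
    exact this a ha
  · intro j hj
    show (if j = i then a else 0) = 0
    rw [if_neg hj]

lemma char_forward (e : DoobV 8 1 4) (h : e = 0 ∨ IsWeightOne e) : e ∈ keyElems := by
  rcases h with h0 | hw
  · rw [h0]; exact List.mem_cons_self
  rcases hw with ⟨i, hg, hz, h2, h3⟩ | ⟨i, hg, hz, h1, h3⟩ | ⟨i, ha, hz, h1, h2⟩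
  · rw [eq_e1 e i hz h2 h3]
    exact e1_mem i ((shr_iff _).1 hg)
  · have hi : i = 0 := Subsingleton.elim _ _
    subst hi
    rw [eq_e2 e h1 h3]
    exact e2_mem ((k4_iff _).1 hg)
  · rw [eq_e3 e i hz h1 h2]
    refine e3_mem i ?_
    have : ∀ a : ZMod 4, a ≠ 0 → a ∈ ([1,2,3] : List (ZMod 4)) := by decide
    exact this _ ha

lemma char_backward (e : DoobV 8 1 4) (h : e ∈ keyElems) : e = 0 ∨ IsWeightOne e := by
  rcases List.mem_cons.1 h with h0 | h'
  · exact Or.inl h0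
  right
  rcases List.mem_append.1 h' with h12 | h3
  · rcases List.mem_append.1 h12 with h1 | h2
    · obtain ⟨i, -, hmem⟩ := List.mem_flatMap.1 h1
      obtain ⟨g, hg, rfl⟩ := List.mem_map.1 hmem
      exact wt1_e1 i hg
    · obtain ⟨g, hg, rfl⟩ := List.mem_map.1 h2
      exact wt1_e2 hg
  · obtain ⟨i, -, hmem⟩ := List.mem_flatMap.1 h3
    obtain ⟨a, ha, rfl⟩ := List.mem_map.1 hmem
    exact wt1_e3 i ha

lemma syndrome_sub (x y : DoobV 8 1 4) :
    syndrome A1 A2 A3 (x - y) = syndrome A1 A2 A3 x - syndrome A1 A2 A3 y := by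
  have hz : ∀ a b : ZMod 2, z2toZ4 (a - b) = z2toZ4 a - z2toZ4 b := by decide
  funext r
  simp only [syndrome, Prod.fst_sub, Prod.snd_sub, Matrix.mulVec_sub, Pi.add_apply,
    Pi.sub_apply, hz]
  ring

end Aux

/-- the additive code with the explicit check matrix `(A1 | A2 | A3)` is a
1-perfect code in the Doob graph `D(8, 1+4)`. -/
theorem statement4 : IsPerfectCode (codeOf A1 A2 A3) := by
  intro v
  obtain ⟨e, he, hs⟩ := fact1 (syndrome A1 A2 A3 v)
  refine ⟨v - e, ⟨?_, ?_⟩, ?_⟩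
  · show syndrome A1 A2 A3 (v - e) = 0
    rw [syndrome_sub, hs, sub_self]
  · have hve : v - (v - e) = e := sub_sub_cancel v e
    rcases char_backward e he with h0 | hw
    · left; rw [h0, sub_zero]
    · right; rw [hve]; exact hw
  · rintro c ⟨hc, hd⟩
    have hc0 : syndrome A1 A2 A3 c = 0 := hc
    have he' : v - c ∈ keyElems := by
      refine char_forward _ ?_
      rcases hd with h | h
      · exact Or.inl (by rw [← h, sub_self])
      · exact Or.inr h
    have hsyn : syndrome A1 A2 A3 (v - c) = syndrome A1 A2 A3 e := by
      rw [syndrome_sub, hc0, sub_zero, hs]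
    have hvce : v - c = e := fact2 _ he' _ he hsyn
    calc c = v - (v - c) := (sub_sub_cancel v c).symm
    _ = v - e := by rw [hvce]
end

section
/- Let m, n', n'', Γ, Δ be nonnegative integers satisfying 2m + n' + n'' = (2^{Γ+2Δ} − 1)/3, 3n' + n'' = 2^{Γ+Δ} − 1, n'' ≤ 2^Δ − 1, and n'' ≠ 1. Then Γ is even and Δ ≠ 1; moreover, if Δ = 0 then m = 0 and n'' = 0. -/
lemma aux2pow {k t : ℕ} (h : 3*t+1 = 2^k) : Even k := by
  have hc : ((3*t+1 : ℕ) : ZMod 3) = ((2:ℕ) : ZMod 3)^k := by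
    rw [h]; push_cast; ring
  have h2 : ((2:ℕ) : ZMod 3) = -1 := by decide
  rw [h2] at hc
  have : ((-1 : ZMod 3))^k = 1 := by
    rw [← hc]; push_cast
    rw [show (3:ZMod 3) = 0 by decide]; ring
  exact (neg_one_pow_eq_one_iff_even (by decide : (-1:ZMod 3) ≠ 1)).mp this

/-- if nonnegative integers `m, n', n'', Γ, Δ` satisfy
`2m+n'+n'' = (2^{Γ+2Δ}-1)/3` (exact division), `3n'+n'' = 2^{Γ+Δ}-1`, `n'' ≤ 2^Δ-1`
and `n'' ≠ 1`, then `Γ` is even and `Δ ≠ 1`; moreover `Δ = 0` implies `m = 0` and `n'' = 0`. -/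
theorem statement11 {m n' n'' Γ Δ : ℕ}
    (h1 : 3 * (2*m + n' + n'') + 1 = 2^(Γ + 2*Δ))
    (h2 : 3*n' + n'' + 1 = 2^(Γ + Δ))
    (h3 : n'' ≤ 2^Δ - 1) (h4 : n'' ≠ 1) :
    Even Γ ∧ Δ ≠ 1 ∧ (Δ = 0 → m = 0 ∧ n'' = 0) := by
  have hGeven : Even Γ := by
    have hE : Even (Γ + 2*Δ) := aux2pow h1
    rcases hE with ⟨r, hr⟩
    exact ⟨r - Δ, by omega⟩
  refine ⟨hGeven, ?_, ?_⟩
  · intro hΔ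
    subst hΔ
    have hn0 : n'' = 0 := by simpa using h3 |> fun h => by omega
    rw [hn0] at h2
    have h2' : 3*n' + 1 = 2^(Γ+1) := by omega
    have : Even (Γ + 1) := aux2pow h2'
    rcases hGeven with ⟨a, ha⟩; rcases this with ⟨b, hb⟩; omega
  · intro hΔ
    subst hΔ
    have hn0 : n'' = 0 := by simpa using h3
    constructor
    · rw [hn0] at h1 h2
      simp at h1 h2
      omega
    · exact hn0
end

section
/- Let C be the quasi-cyclic additive 1-perfect code in the Doob graph D(7, 0+7) defined as follows: with R = (ℤ/4)[x]/(x^3 + 2x^2 + x + 3), ξ the image of x (satisfying ξ^7 = 1 with ξ^0,…,ξ^6 pairwise distinct), and R identified with (ℤ/4)^3 via the basis 1, ξ, ξ^2, C is the kernel of the 3×21 check matrix whose first 14 columns are the pairs (ξ^i + 2ξ^{i+2}, ξ^{i+1} + 2ξ^{i+5}), i = 0,…,6, and whose last 7 columns are ξ^i, i = 0,…,6. Then C has exactly 7 codewords of weight 3 whose first 14 coordinates are all zero, and every such codeword has additive order 2 (all its nonzero entries equal 2). -/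
open Matrix Polynomial Finset

/-- The Galois ring `GR(4³) = (ℤ/4)[x]/(x³ + 2x² + x + 3)`. -/
abbrev R3 : Type := AdjoinRoot (X^3 + 2*X^2 + X + 3 : (ZMod 4)[X])

/-- `ξ`, the image of `x` in `R3`. -/
noncomputable def xi3 : R3 := AdjoinRoot.root (X^3 + 2*X^2 + X + 3 : (ZMod 4)[X])

/-- The columns of the check matrix `H`, as elements of `R3`: for `j < 14`, the `i`-th pair
(`i = j/2`) is `(ξ^i + 2ξ^{i+2}, ξ^{i+1} + 2ξ^{i+5})`; the last 7 columns are `ξ^i`. -/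
noncomputable def col3 : Fin 21 → R3 := fun j =>
  if j.1 < 14 then
    (if j.1 % 2 = 0 then xi3 ^ (j.1/2) + 2 * xi3 ^ (j.1/2 + 2)
     else xi3 ^ (j.1/2 + 1) + 2 * xi3 ^ (j.1/2 + 5))
  else xi3 ^ (j.1 - 14)

/-- Flattening of a vertex of `D(7, 0+7)` to a vector of length 21 over `ℤ/4`. -/
def flat3 (c : DoobV 7 0 7) : Fin 21 → ZMod 4 := fun j =>
  if h : j.1 < 14 then c.1 ⟨j.1, by omega⟩ else c.2.2 ⟨j.1 - 14, by have := j.2; omega⟩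

/-- The code `C = {c : H cᵀ = 0}`, where `H cᵀ = 0` is expressed (via the identification of
`R3` with `(ℤ/4)³` by coordinates in the basis `1, ξ, ξ²`) as `∑ⱼ cⱼ • col3 j = 0` in `R3`. -/
noncomputable def C3 : Set (DoobV 7 0 7) :=
  {c | ∑ j : Fin 21, flat3 c j • col3 j = 0}


lemma f3_monic : (X^3 + 2*X^2 + X + 3 : (ZMod 4)[X]).Monic := by
  monicity!

lemma f3_deg : (X^3 + 2*X^2 + X + 3 : (ZMod 4)[X]).degree = 3 := by
  compute_degree!

lemma h40 : (4 : R3) = 0 := by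
  have h1 : ((4 : ZMod 4) : R3) = algebraMap (ZMod 4) R3 4 := by
    simp [map_ofNat]
  have : (4 : ZMod 4) = 0 := by decide
  calc (4 : R3) = algebraMap (ZMod 4) R3 4 := by simp [map_ofNat]
    _ = algebraMap (ZMod 4) R3 0 := by rw [this]
    _ = 0 := map_zero _

lemma hrel : xi3 ^ 3 + 2 * xi3 ^ 2 + xi3 + 3 = 0 := by
  have h := AdjoinRoot.mk_self (f := (X^3 + 2*X^2 + X + 3 : (ZMod 4)[X]))
  simpa [xi3, map_add, _root_.map_mul, map_pow, map_ofNat] using h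

lemma lin_indep (a b c : ZMod 4) (h : a • (1:R3) + b • xi3 + c • xi3 ^ 2 = 0) :
    a = 0 ∧ b = 0 ∧ c = 0 := by
  set g : (ZMod 4)[X] := X^3 + 2*X^2 + X + 3 with hg
  set p : (ZMod 4)[X] := C a + C b * X + C c * X^2 with hp
  have hmk : AdjoinRoot.mk g p = 0 := by
    have : AdjoinRoot.mk g p = a • (1:R3) + b • xi3 + c • xi3 ^ 2 := by
      simp [hp, map_add, _root_.map_mul, map_pow, AdjoinRoot.mk_C, AdjoinRoot.mk_X,
        Algebra.smul_def, xi3, mul_one]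
      rfl
    rw [this, h]
  have hdvd : g ∣ p := AdjoinRoot.mk_eq_zero.mp hmk
  have hdeg : p.degree < g.degree := by
    rw [hg, f3_deg]
    have : p.degree ≤ 2 := by rw [hp]; compute_degree
    exact lt_of_le_of_lt this (by decide)
  haveI : Nontrivial (ZMod 4) := ⟨0, 1, by decide⟩
  have hp0 : p = 0 := by
    rw [← Polynomial.modByMonic_eq_zero_iff_dvd f3_monic] at hdvd
    rwa [(Polynomial.modByMonic_eq_self_iff f3_monic).mpr hdeg] at hdvd
  refine ⟨?_, ?_, ?_⟩
  · have := congrArg (fun q => Polynomial.coeff q 0) hp0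
    simpa [hp, coeff_C] using this
  · have := congrArg (fun q => Polynomial.coeff q 1) hp0
    simpa [hp, coeff_C] using this
  · have := congrArg (fun q => Polynomial.coeff q 2) hp0
    simpa [hp, coeff_C] using this

lemma h3 : xi3 ^ 3 = 1 + 3 * xi3 + 2 * xi3 ^ 2 := by
  linear_combination hrel + (-1 - xi3 - xi3 ^ 2) * h40

lemma h4 : xi3 ^ 4 = 2 + 3 * xi3 + 3 * xi3 ^ 2 := by
  linear_combination (xi3 - 2) * hrel + (1 - xi3) * h40

lemma h5 : xi3 ^ 5 = 3 + 3 * xi3 + xi3 ^ 2 := by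
  linear_combination (xi3 ^ 2 - 2 * xi3 + 3) * hrel + (-3 - 2 * xi3 ^ 2) * h40

lemma h6 : xi3 ^ 6 = 1 + 2 * xi3 + xi3 ^ 2 := by
  linear_combination (xi3 ^ 3 - 2 * xi3 ^ 2 + 3 * xi3 - 7) * hrel + (5 - xi3 + 4 * xi3 ^ 2) * h40

def rowA (v : Fin 7 → ZMod 4) : ZMod 4 := v 0 + v 3 + 2 * v 4 + 3 * v 5 + v 6
def rowB (v : Fin 7 → ZMod 4) : ZMod 4 := v 1 + 3 * v 3 + 3 * v 4 + 3 * v 5 + 2 * v 6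
def rowC (v : Fin 7 → ZMod 4) : ZMod 4 := v 2 + 2 * v 3 + 3 * v 4 + v 5 + v 6

lemma smul_eq_mul' (a : ZMod 4) (z : R3) : a • z = algebraMap (ZMod 4) R3 a * z :=
  Algebra.smul_def a z

lemma key (v : Fin 7 → ZMod 4) :
    (∑ j : Fin 7, v j • xi3 ^ (j : ℕ) = 0) ↔ (rowA v = 0 ∧ rowB v = 0 ∧ rowC v = 0) := by
  have hexp : ∑ j : Fin 7, v j • xi3 ^ (j : ℕ)
      = (rowA v) • (1:R3) + (rowB v) • xi3 + (rowC v) • xi3 ^ 2 := by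
    rw [Fin.sum_univ_seven]
    simp only [rowA, rowB, rowC, smul_eq_mul']
    push_cast [map_add, _root_.map_mul, map_ofNat]
    rw [show ((0:Fin 7):ℕ) = 0 from rfl, show ((1:Fin 7):ℕ) = 1 from rfl,
      show ((2:Fin 7):ℕ) = 2 from rfl, show ((3:Fin 7):ℕ) = 3 from rfl,
      show ((4:Fin 7):ℕ) = 4 from rfl, show ((5:Fin 7):ℕ) = 5 from rfl,
      show ((6:Fin 7):ℕ) = 6 from rfl, h3, h4, h5, h6]
    ring
  rw [hexp]
  constructor
  · exact fun h => lin_indep _ _ _ h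
  · rintro ⟨ha, hb, hc⟩
    rw [ha, hb, hc]
    simp


def goodV (v : Fin 7 → ZMod 4) : Prop :=
  rowA v = 0 ∧ rowB v = 0 ∧ rowC v = 0 ∧ (Finset.univ.filter fun j => v j ≠ 0).card = 3

instance : DecidablePred goodV := fun v => by unfold goodV; infer_instance

def Vf : Finset (Fin 7 → ZMod 4) := {![0,0,0,2,2,0,2], ![0,0,2,2,0,2,0], ![0,2,0,0,0,2,2], ![0,2,2,0,2,0,0], ![2,0,0,0,2,2,0], ![2,0,2,0,0,0,2], ![2,2,0,2,0,0,0]}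

lemma Vf_card : Vf.card = 7 := by decide

set_option maxRecDepth 100000 in
set_option maxHeartbeats 1000000 in
lemma enum2 : ∀ a3 a4 a5 a6 : ZMod 4,
    ((Finset.univ.filter fun j : Fin 7 =>
        (![-(a3 + 2*a4 + 3*a5 + a6), -(3*a3 + 3*a4 + 3*a5 + 2*a6),
           -(2*a3 + 3*a4 + a5 + a6), a3, a4, a5, a6] : Fin 7 → ZMod 4) j ≠ 0).card = 3) →
    (![-(a3 + 2*a4 + 3*a5 + a6), -(3*a3 + 3*a4 + 3*a5 + 2*a6),
       -(2*a3 + 3*a4 + a5 + a6), a3, a4, a5, a6] : Fin 7 → ZMod 4) ∈ Vf := by decide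

lemma Vf_good : ∀ v ∈ Vf, goodV v := by
  intro v hv
  simp only [Vf, Finset.mem_insert, Finset.mem_singleton] at hv
  rcases hv with h|h|h|h|h|h|h <;> subst h <;>
    exact ⟨by decide, by decide, by decide, by decide⟩

lemma mem_iff (v : Fin 7 → ZMod 4) : goodV v ↔ v ∈ Vf := by
  constructor
  · rintro ⟨hA, hB, hC, hw⟩
    unfold rowA at hA; unfold rowB at hB; unfold rowC at hC
    have h0 : v 0 = -(v 3 + 2*v 4 + 3*v 5 + v 6) := by linear_combination hA
    have h1 : v 1 = -(3*v 3 + 3*v 4 + 3*v 5 + 2*v 6) := by linear_combination hB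
    have h2 : v 2 = -(2*v 3 + 3*v 4 + v 5 + v 6) := by linear_combination hC
    have hv : v = ![-(v 3 + 2*v 4 + 3*v 5 + v 6), -(3*v 3 + 3*v 4 + 3*v 5 + 2*v 6),
        -(2*v 3 + 3*v 4 + v 5 + v 6), v 3, v 4, v 5, v 6] := by
      funext i
      fin_cases i
      · exact h0
      · exact h1
      · exact h2
      all_goals rfl
    rw [hv] at hw ⊢
    exact enum2 (v 3) (v 4) (v 5) (v 6) hw
  · exact Vf_good v

lemma all_two' : ∀ v ∈ Vf, ∀ j : Fin 7, v j ≠ 0 → v j = 2 := by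
  intro v hv
  simp only [Vf, Finset.mem_insert, Finset.mem_singleton] at hv
  rcases hv with h|h|h|h|h|h|h <;> subst h <;> decide



lemma flat3_sum (c : DoobV 7 0 7) (h1 : c.1 = 0) :
    ∑ j : Fin 21, flat3 c j • col3 j = ∑ j : Fin 7, c.2.2 j • xi3 ^ (j : ℕ) := by
  have hc1 : ∀ i : Fin 14, c.1 i = 0 := fun i => congrFun h1 i
  simp only [Fin.sum_univ_succ, Fin.sum_univ_zero]
  norm_num [flat3, col3, hc1]
  rfl

lemma mem_C3_iff (c : DoobV 7 0 7) (h1 : c.1 = 0) :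
    c ∈ C3 ↔ (rowA c.2.2 = 0 ∧ rowB c.2.2 = 0 ∧ rowC c.2.2 = 0) := by
  show (∑ j : Fin 21, flat3 c j • col3 j = 0) ↔ _
  rw [flat3_sum c h1, key]

def emb3 (v : Fin 7 → ZMod 4) : DoobV 7 0 7 := (0, fun i => i.elim0, v)

lemma emb3_inj : Function.Injective emb3 := fun a b h => congrArg (fun z => z.2.2) h

lemma set_eq :
    {c : DoobV 7 0 7 | c ∈ C3 ∧ c.1 = 0 ∧
        (Finset.univ.filter fun j : Fin 7 => c.2.2 j ≠ 0).card = 3} = emb3 '' ↑Vf := by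
  ext c
  constructor
  · rintro ⟨hC, h1, hw⟩
    have hg : goodV c.2.2 := by
      obtain ⟨a, b, cc⟩ := (mem_C3_iff c h1).mp hC
      exact ⟨a, b, cc, hw⟩
    refine ⟨c.2.2, (mem_iff _).mp hg, ?_⟩
    have h21 : c.2.1 = fun i => i.elim0 := by funext i; exact i.elim0
    show (0, fun i => i.elim0, c.2.2) = c
    rw [← h1, ← h21]
  · rintro ⟨v, hv, rfl⟩
    have hg := Vf_good v hv
    refine ⟨?_, rfl, hg.2.2.2⟩
    exact (mem_C3_iff (emb3 v) rfl).mpr ⟨hg.1, hg.2.1, hg.2.2.1⟩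

/-- the quasi-cyclic additive 1-perfect code `C3` in `D(7, 0+7)` has exactly
7 codewords of weight 3 whose first 14 coordinates are all zero (for such vertices the
weight is the number of nonzero entries among the last 7 coordinates), and every such
codeword has all its nonzero entries equal to 2 (hence additive order 2). -/
theorem statement16 :
    {c : DoobV 7 0 7 | c ∈ C3 ∧ c.1 = 0 ∧
        (Finset.univ.filter fun j : Fin 7 => c.2.2 j ≠ 0).card = 3}.ncard = 7 ∧
    (∀ c : DoobV 7 0 7, c ∈ C3 → c.1 = 0 →
        (Finset.univ.filter fun j : Fin 7 => c.2.2 j ≠ 0).card = 3 →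
        ∀ j : Fin 7, c.2.2 j ≠ 0 → c.2.2 j = 2) := by
  constructor
  · rw [set_eq, Set.ncard_image_of_injective _ emb3_inj, Set.ncard_coe_finset, Vf_card]
  · intro c hC h1 hw j hj
    have hg : goodV c.2.2 := by
      obtain ⟨a, b, cc⟩ := (mem_C3_iff c h1).mp hC
      exact ⟨a, b, cc, hw⟩
    exact all_two' c.2.2 ((mem_iff _).mp hg) j hj
end

section
/- Let m, n'' be nonnegative integers and let φ be an automorphism of the Doob graph D(m, 0+n'') with φ(0) = 0, where 0 is the zero element of (ℤ/4)^{2m} × (ℤ/4)^{n''}. Then φ maps the set of vertices whose first 2m coordinates are all zero onto itself. -/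
open Matrix Polynomial Finset

namespace S17

variable {m n'' : ℕ}

/-- The disjunction characterizing membership in `shrGen`. -/
def shrP (p : ZMod 4 × ZMod 4) : Prop :=
  p = (0,1) ∨ p = (3,0) ∨ p = (3,3) ∨ p = (0,3) ∨ p = (1,0) ∨ p = (1,1)

lemma mem_shrGen {p : ZMod 4 × ZMod 4} : p ∈ shrGen ↔ shrP p := Iff.rfl

set_option synthInstance.maxSize 2000 in
set_option synthInstance.maxHeartbeats 1000000 in
set_option maxHeartbeats 1000000 in
lemma shr_no4 : ∀ u v t : ZMod 4 × ZMod 4, shrP u → shrP v → shrP t →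
    shrP (v - u) → shrP (t - u) → shrP (t - v) → False := by unfold shrP; decide

lemma shr_neg : ∀ p : ZMod 4 × ZMod 4, shrP p → shrP (-p) := by unfold shrP; decide

lemma shr_ne_zero : ∀ p : ZMod 4 × ZMod 4, shrP p → p ≠ (0, 0) := by unfold shrP; decide

lemma snd1_zero (e : DoobV m 0 n'') : e.2.1 = 0 := funext fun j => j.elim0

/-- `e` is a Shrikhande-type weight-one element supported at pair `i`. -/
def ShrAt (i : Fin m) (e : DoobV m 0 n'') : Prop :=
  (e.1 ⟨2*i.1, by have := i.2; omega⟩, e.1 ⟨2*i.1+1, by have := i.2; omega⟩) ∈ shrGen ∧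
  (∀ j : Fin (2*m), j.1 ≠ 2*i.1 → j.1 ≠ 2*i.1+1 → e.1 j = 0) ∧ e.2.2 = 0

/-- `e` is a `K₄`-type weight-one element supported at coordinate `i`. -/
def K4At (i : Fin n'') (e : DoobV m 0 n'') : Prop :=
  e.2.2 i ≠ 0 ∧ (∀ j : Fin n'', j ≠ i → e.2.2 j = 0) ∧ e.1 = 0

lemma iw_iff (e : DoobV m 0 n'') :
    IsWeightOne e ↔ (∃ i, ShrAt i e) ∨ (∃ i, K4At i e) := by
  constructor
  · rintro (⟨i, h1, h2, _, h4⟩ | ⟨i, _⟩ | ⟨i, h1, h2, h3, _⟩)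
    · exact Or.inl ⟨i, h1, h2, h4⟩
    · exact i.elim0
    · exact Or.inr ⟨i, h1, h2, h3⟩
  · rintro (⟨i, h1, h2, h3⟩ | ⟨i, h1, h2, h3⟩)
    · exact Or.inl ⟨i, h1, h2, snd1_zero e, h3⟩
    · exact Or.inr (Or.inr ⟨i, h1, h2, h3, snd1_zero e⟩)

lemma iw_neg {e : DoobV m 0 n''} (h : IsWeightOne e) : IsWeightOne (-e) := by
  rw [iw_iff] at h ⊢
  rcases h with ⟨i, h1, h2, h3⟩ | ⟨i, h1, h2, h3⟩
  · refine Or.inl ⟨i, ?_, ?_, ?_⟩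
    · exact mem_shrGen.2 (shr_neg _ (mem_shrGen.1 h1))
    · intro j hj1 hj2
      have : e.1 j = 0 := h2 j hj1 hj2
      show -(e.1 j) = 0
      simp [this]
    · show -(e.2.2) = 0; simp [h3]
  · refine Or.inr ⟨i, ?_, ?_, ?_⟩
    · show -(e.2.2 i) ≠ 0; simpa using h1
    · intro j hj
      have : e.2.2 j = 0 := h2 j hj
      show -(e.2.2 j) = 0; simp [this]
    · show -(e.1) = 0; simp [h3]

lemma shrAt_pos {i : Fin m} {e : DoobV m 0 n''} (h : ShrAt i e) :
    ∃ p : Fin (2*m), e.1 p ≠ 0 ∧ (p.1 = 2*i.1 ∨ p.1 = 2*i.1+1) := by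
  have hne := shr_ne_zero _ (mem_shrGen.1 h.1)
  by_cases h1 : e.1 ⟨2*i.1, by have := i.2; omega⟩ = 0
  · by_cases h2 : e.1 ⟨2*i.1+1, by have := i.2; omega⟩ = 0
    · exact absurd (by rw [h1, h2] at hne; exact hne rfl) (by simp)
    · exact ⟨_, h2, Or.inr rfl⟩
  · exact ⟨_, h1, Or.inl rfl⟩

lemma shrAt_neg {i : Fin m} {e : DoobV m 0 n''} (h : ShrAt i e) : ShrAt i (-e) := by
  refine ⟨mem_shrGen.2 (shr_neg _ (mem_shrGen.1 h.1)), ?_, ?_⟩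
  · intro j hj1 hj2
    have : e.1 j = 0 := h.2.1 j hj1 hj2
    show -(e.1 j) = 0; simp [this]
  · show -(e.2.2) = 0; simp [h.2.2]

/-- Two Shrikhande-type elements at different pairs cannot sum to a weight-one element. -/
lemma no_two_pairs {i₁ i₂ : Fin m} (hne : i₁ ≠ i₂) {e f : DoobV m 0 n''}
    (he : ShrAt i₁ e) (hf : ShrAt i₂ f) : ¬ IsWeightOne (e + f) := by
  have hval : i₁.1 ≠ i₂.1 := fun h => hne (Fin.ext h)
  obtain ⟨p, hp, hpi⟩ := shrAt_pos he
  obtain ⟨q, hq, hqi⟩ := shrAt_pos hf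
  have hfp : f.1 p = 0 := hf.2.1 p (by omega) (by omega)
  have heq : e.1 q = 0 := he.2.1 q (by omega) (by omega)
  have hsp : (e + f).1 p ≠ 0 := by
    show e.1 p + f.1 p ≠ 0; simpa [hfp] using hp
  have hsq : (e + f).1 q ≠ 0 := by
    show e.1 q + f.1 q ≠ 0; simpa [heq] using hq
  rw [iw_iff]
  rintro (⟨c, hc⟩ | ⟨c, hc⟩)
  · have h1 : p.1 = 2*c.1 ∨ p.1 = 2*c.1+1 := by
      by_contra h'
      push_neg at h'
      exact hsp (hc.2.1 p h'.1 h'.2)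
    have h2 : q.1 = 2*c.1 ∨ q.1 = 2*c.1+1 := by
      by_contra h'
      push_neg at h'
      exact hsq (hc.2.1 q h'.1 h'.2)
    omega
  · exact hsp (by rw [hc.2.2]; rfl)

lemma shrAt_of_fst_ne {x y : DoobV m 0 n''} (h : IsWeightOne (x - y)) (hne : x.1 ≠ y.1) :
    ∃ i, ShrAt i (x - y) := by
  rcases (iw_iff _).1 h with ⟨i, hi⟩ | ⟨i, hi⟩
  · exact ⟨i, hi⟩
  · exact absurd (sub_eq_zero.1 hi.2.2) hne

lemma step1 {i : Fin m} {x y u : DoobV m 0 n''} (hd : ShrAt i (x - y))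
    (hux : IsWeightOne (u - x)) (huy : IsWeightOne (u - y)) : ∃ c, ShrAt c (u - x) := by
  rcases (iw_iff _).1 hux with ⟨c, hc⟩ | ⟨c, hc⟩
  · exact ⟨c, hc⟩
  exfalso
  have hdecomp : u - y = (u - x) + (x - y) := by abel
  rcases (iw_iff _).1 huy with ⟨c', hc'⟩ | ⟨c', hc'⟩
  · -- ShrAt c' (u-y) forces (u-y).2.2 = 0, but it equals (u-x).2.2 which is nonzero at c
    have h1 : (u - y).2.2 c = (u - x).2.2 c + (x - y).2.2 c := by rw [hdecomp]; rfl
    have h2 : (x - y).2.2 c = 0 := by rw [hd.2.2]; rfl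
    have h3 : (u - y).2.2 c = 0 := by rw [hc'.2.2]; rfl
    rw [h3, h2, add_zero] at h1
    exact hc.1 h1.symm
  · -- K4At c' (u-y) forces (u-y).1 = 0, but it is nonzero on pair i
    obtain ⟨p, hp, _⟩ := shrAt_pos hd
    have h1 : (u - y).1 p = (u - x).1 p + (x - y).1 p := by rw [hdecomp]; rfl
    have h2 : (u - x).1 p = 0 := by rw [hc.2.2]; rfl
    have h3 : (u - y).1 p = 0 := by rw [hc'.2.2]; rfl
    rw [h3, h2, zero_add] at h1
    exact hp h1.symm

/-- In a 4-clique, first components agree: the Shrikhande graph has no `K₄`. -/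
lemma clique_fst {x y z w : DoobV m 0 n''}
    (hxy : IsWeightOne (x - y)) (hxz : IsWeightOne (x - z)) (hxw : IsWeightOne (x - w))
    (hyz : IsWeightOne (y - z)) (hyw : IsWeightOne (y - w)) (hzw : IsWeightOne (z - w)) :
    x.1 = y.1 := by
  by_contra hne
  obtain ⟨i, hi⟩ := shrAt_of_fst_ne hxy hne
  have hzx : IsWeightOne (z - x) := by have := iw_neg hxz; rwa [neg_sub] at this
  have hzy : IsWeightOne (z - y) := by have := iw_neg hyz; rwa [neg_sub] at this
  have hwx : IsWeightOne (w - x) := by have := iw_neg hxw; rwa [neg_sub] at this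
  have hwy : IsWeightOne (w - y) := by have := iw_neg hyw; rwa [neg_sub] at this
  have hwz : IsWeightOne (w - z) := by have := iw_neg hzw; rwa [neg_sub] at this
  have hiyx : ShrAt i (y - x) := by have := shrAt_neg hi; rwa [neg_sub] at this
  obtain ⟨i₁, h₁⟩ := step1 hi hzx hzy
  obtain ⟨i₃, h₃⟩ := step1 hi hwx hwy
  -- i₁ = i
  have e₁ : i₁ = i := by
    by_contra hne'
    exact no_two_pairs hne' h₁ hi (by rwa [sub_add_sub_cancel]) 
  subst e₁
  have e₃ : i₃ = i₁ := by
    by_contra hne'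
    exact no_two_pairs hne' h₃ hi (by rwa [sub_add_sub_cancel])
  subst e₃
  -- z - y is Shrikhande type at pair i₃
  have hzyShr : ∃ c, ShrAt c (z - y) := by
    rcases (iw_iff _).1 hzy with ⟨c, hc⟩ | ⟨c, hc⟩
    · exact ⟨c, hc⟩
    · exfalso
      have hdecomp : z - y = (z - x) + (x - y) := by abel
      have h1 : (z - y).2.2 c = (z - x).2.2 c + (x - y).2.2 c := by rw [hdecomp]; rfl
      have h2 : (x - y).2.2 c = 0 := by rw [hi.2.2]; rfl
      have h2' : (z - x).2.2 c = 0 := by rw [h₁.2.2]; rfl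
      rw [h2, h2', add_zero] at h1
      exact hc.1 h1
  obtain ⟨i₂, h₂⟩ := hzyShr
  have e₂ : i₂ = i₃ := by
    by_contra hne'
    exact no_two_pairs hne' h₂ hiyx (by rwa [sub_add_sub_cancel])
  subst e₂
  have hwyShr : ∃ c, ShrAt c (w - y) := by
    rcases (iw_iff _).1 hwy with ⟨c, hc⟩ | ⟨c, hc⟩
    · exact ⟨c, hc⟩
    · exfalso
      have hdecomp : w - y = (w - x) + (x - y) := by abel
      have h1 : (w - y).2.2 c = (w - x).2.2 c + (x - y).2.2 c := by rw [hdecomp]; rfl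
      have h2 : (x - y).2.2 c = 0 := by rw [hi.2.2]; rfl
      have h2' : (w - x).2.2 c = 0 := by rw [h₃.2.2]; rfl
      rw [h2, h2', add_zero] at h1
      exact hc.1 h1
  obtain ⟨i₄, h₄⟩ := hwyShr
  have e₄ : i₄ = i₂ := by
    by_contra hne'
    exact no_two_pairs hne' h₄ hiyx (by rwa [sub_add_sub_cancel])
  subst e₄
  have hwzShr : ∃ c, ShrAt c (w - z) := by
    rcases (iw_iff _).1 hwz with ⟨c, hc⟩ | ⟨c, hc⟩
    · exact ⟨c, hc⟩
    · exfalso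
      have hdecomp : w - x = (w - z) + (z - x) := by abel
      have h1 : (w - x).2.2 c = (w - z).2.2 c + (z - x).2.2 c := by rw [hdecomp]; rfl
      have h2 : (z - x).2.2 c = 0 := by rw [h₁.2.2]; rfl
      have h2' : (w - x).2.2 c = 0 := by rw [h₃.2.2]; rfl
      rw [h2, h2', add_zero] at h1
      exact hc.1 h1.symm
  obtain ⟨i₅, h₅⟩ := hwzShr
  have e₅ : i₅ = i₄ := by
    by_contra hne'
    exact no_two_pairs hne' h₅ h₁ (by rwa [sub_add_sub_cancel])
  subst e₅
  -- extract the pair values and contradict `shr_no4`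
  set P1 : Fin (2*m) := ⟨2*i₅.1, by have := i₅.2; omega⟩ with hP1
  set P2 : Fin (2*m) := ⟨2*i₅.1+1, by have := i₅.2; omega⟩ with hP2
  have pvsub : ∀ a b : DoobV m 0 n'',
      ((a - b).1 P1, (a - b).1 P2) = (a.1 P1 - b.1 P1, a.1 P2 - b.1 P2) := fun a b => rfl
  have hu := mem_shrGen.1 hiyx.1
  have hv := mem_shrGen.1 h₁.1
  have ht := mem_shrGen.1 h₃.1
  have hvu := mem_shrGen.1 h₂.1
  have htu := mem_shrGen.1 h₄.1
  have htv := mem_shrGen.1 h₅.1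
  rw [pvsub] at hu hv ht hvu htu htv
  refine shr_no4 (y.1 P1 - x.1 P1, y.1 P2 - x.1 P2) (z.1 P1 - x.1 P1, z.1 P2 - x.1 P2)
    (w.1 P1 - x.1 P1, w.1 P2 - x.1 P2) hu hv ht ?_ ?_ ?_
  · rw [Prod.mk_sub_mk,
      show z.1 P1 - x.1 P1 - (y.1 P1 - x.1 P1) = z.1 P1 - y.1 P1 from by ring,
      show z.1 P2 - x.1 P2 - (y.1 P2 - x.1 P2) = z.1 P2 - y.1 P2 from by ring]
    exact hvu
  · rw [Prod.mk_sub_mk,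
      show w.1 P1 - x.1 P1 - (y.1 P1 - x.1 P1) = w.1 P1 - y.1 P1 from by ring,
      show w.1 P2 - x.1 P2 - (y.1 P2 - x.1 P2) = w.1 P2 - y.1 P2 from by ring]
    exact htu
  · rw [Prod.mk_sub_mk,
      show w.1 P1 - x.1 P1 - (z.1 P1 - x.1 P1) = w.1 P1 - z.1 P1 from by ring,
      show w.1 P2 - x.1 P2 - (z.1 P2 - x.1 P2) = w.1 P2 - z.1 P2 from by ring]
    exact htv

/-- The weight-one element supported at the last-block coordinate `j` with value `s`. -/
def delta (j : Fin n'') (s : ZMod 4) : DoobV m 0 n'' :=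
  (0, 0, fun k => if k = j then s else 0)

lemma iw_delta (j : Fin n'') {s : ZMod 4} (hs : s ≠ 0) :
    IsWeightOne (delta j s : DoobV m 0 n'') := by
  rw [iw_iff]
  refine Or.inr ⟨j, ?_, ?_, rfl⟩
  · show (if j = j then s else 0) ≠ 0; simpa using hs
  · intro k hk
    show (if k = j then s else 0) = 0
    simp [hk]

lemma delta_sub (j : Fin n'') (s t : ZMod 4) :
    (delta j s : DoobV m 0 n'') - delta j t = delta j (s - t) := by
  refine Prod.ext (sub_zero (0 : Fin (2*m) → ZMod 4)) (Prod.ext (funext fun k => k.elim0) ?_)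
  funext k
  show (if k = j then s else 0) - (if k = j then t else 0) = (if k = j then s - t else 0)
  by_cases h : k = j <;> simp [h]

/-- `x` and `y` are adjacent and lie in a common 4-clique. -/
def R (x y : DoobV m 0 n'') : Prop :=
  ∃ z w : DoobV m 0 n'', IsWeightOne (x - y) ∧ IsWeightOne (x - z) ∧ IsWeightOne (x - w) ∧
    IsWeightOne (y - z) ∧ IsWeightOne (y - w) ∧ IsWeightOne (z - w)

lemma zmod4_aux : ∀ t : ZMod 4, t ≠ 0 →
    (if t = 1 then (2 : ZMod 4) else 1) ≠ 0 ∧ (if t = 3 then (2 : ZMod 4) else 3) ≠ 0 ∧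
    t - (if t = 1 then (2 : ZMod 4) else 1) ≠ 0 ∧ t - (if t = 3 then (2 : ZMod 4) else 3) ≠ 0 ∧
    (if t = 1 then (2 : ZMod 4) else 1) - (if t = 3 then (2 : ZMod 4) else 3) ≠ 0 := by decide

lemma R_iff (x y : DoobV m 0 n'') : R x y ↔ IsWeightOne (x - y) ∧ x.1 = y.1 := by
  constructor
  · rintro ⟨z, w, h1, h2, h3, h4, h5, h6⟩
    exact ⟨h1, clique_fst h1 h2 h3 h4 h5 h6⟩
  · rintro ⟨hadj, hfst⟩
    obtain ⟨j, hj⟩ : ∃ i, K4At i (x - y) := by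
      rcases (iw_iff _).1 hadj with ⟨i, hi⟩ | ⟨i, hi⟩
      · exfalso
        obtain ⟨p, hp, _⟩ := shrAt_pos hi
        exact hp (by show x.1 p - y.1 p = 0; rw [hfst]; ring)
      · exact ⟨i, hi⟩
    set t := (x - y).2.2 j with htdef
    have hdelta : x - y = delta j t := by
      refine Prod.ext ?_ (Prod.ext (snd1_zero _) ?_)
      · exact hj.2.2
      · funext k
        show (x - y).2.2 k = if k = j then t else 0
        by_cases h : k = j
        · subst h; rw [if_pos rfl]
        · rw [if_neg h]; exact hj.2.1 k h
    obtain ⟨hs0, hs'0, hts, hts', hss'⟩ := zmod4_aux t hj.1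
    set s := (if t = 1 then (2 : ZMod 4) else 1)
    set s' := (if t = 3 then (2 : ZMod 4) else 3)
    refine ⟨y + delta j s, y + delta j s', hadj, ?_, ?_, ?_, ?_, ?_⟩
    · have : x - (y + delta j s) = delta j (t - s) := by
        rw [show x - (y + delta j s) = (x - y) - delta j s by abel, hdelta, delta_sub]
      rw [this]; exact iw_delta j hts
    · have : x - (y + delta j s') = delta j (t - s') := by
        rw [show x - (y + delta j s') = (x - y) - delta j s' by abel, hdelta, delta_sub]
      rw [this]; exact iw_delta j hts'
    · have : y - (y + delta j s) = -(delta j s) := by abel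
      rw [this]; exact iw_neg (iw_delta j hs0)
    · have : y - (y + delta j s') = -(delta j s') := by abel
      rw [this]; exact iw_neg (iw_delta j hs'0)
    · have : (y + delta j s) - (y + delta j s') = delta j (s - s') := by
        rw [show (y + delta j s) - (y + delta j s') = delta j s - delta j s' by abel, delta_sub]
      rw [this]; exact iw_delta j hss'

lemma rtg_fst {v : DoobV m 0 n''} (h : Relation.ReflTransGen R 0 v) : v.1 = 0 := by
  induction h with
  | refl => rfl
  | tail _ hR ih => rw [← ((R_iff _ _).1 hR).2]; exact ih

lemma reach_aux : ∀ s : Finset (Fin n''), ∀ g : Fin n'' → ZMod 4,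
    (∀ i, i ∉ s → g i = 0) → Relation.ReflTransGen R (0 : DoobV m 0 n'') (0, 0, g) := by
  intro s
  induction s using Finset.induction_on with
  | empty =>
    intro g hg
    have : g = 0 := funext fun i => hg i (Finset.notMem_empty i)
    subst this
    exact Relation.ReflTransGen.refl
  | insert a s ha ih =>
    intro g hg
    set g' := Function.update g a 0 with hg'
    have hsup : ∀ i, i ∉ s → g' i = 0 := by
      intro i hi
      by_cases h : i = a
      · subst h; simp [hg']
      · rw [hg', Function.update_of_ne h]
        exact hg i (by simp [h, hi])
    have h1 : Relation.ReflTransGen R (0 : DoobV m 0 n'') (0, 0, g') := ih g' hsup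
    by_cases h : g a = 0
    · have : g' = g := by
        funext i
        by_cases hia : i = a
        · subst hia; simp [hg', h]
        · simp [hg', Function.update_of_ne hia]
      rwa [this] at h1
    · refine h1.tail ?_
      rw [R_iff]
      constructor
      · have hd : ((0, 0, g') : DoobV m 0 n'') - (0, 0, g) = delta a (-(g a)) := by
          refine Prod.ext (sub_zero (0 : Fin (2*m) → ZMod 4)) (Prod.ext (snd1_zero _) ?_)
          funext k
          show g' k - g k = if k = a then -(g a) else 0
          by_cases hka : k = a
          · subst hka; simp [hg']
          · simp [hg', Function.update_of_ne hka, hka]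
        rw [hd]
        exact iw_delta a (by simpa using h)
      · rfl

lemma reach {v : DoobV m 0 n''} (hv : v.1 = 0) : Relation.ReflTransGen R 0 v := by
  have : v = (0, 0, v.2.2) := Prod.ext hv (Prod.ext (snd1_zero v) rfl)
  rw [this]
  exact reach_aux Finset.univ v.2.2 (fun i hi => absurd (Finset.mem_univ i) hi)

lemma R_map (ψ : DoobV m 0 n'' ≃ DoobV m 0 n'')
    (hψ : ∀ x y : DoobV m 0 n'', IsWeightOne (x - y) ↔ IsWeightOne (ψ x - ψ y))
    {x y : DoobV m 0 n''} (h : R x y) : R (ψ x) (ψ y) := by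
  obtain ⟨z, w, h1, h2, h3, h4, h5, h6⟩ := h
  exact ⟨ψ z, ψ w, (hψ _ _).1 h1, (hψ _ _).1 h2, (hψ _ _).1 h3,
    (hψ _ _).1 h4, (hψ _ _).1 h5, (hψ _ _).1 h6⟩

end S17

/-- an automorphism `φ` of the Doob graph `D(m, 0+n'')` (a bijection of the
vertices preserving adjacency, where `x` and `y` are adjacent iff `x - y` has weight 1)
with `φ 0 = 0` maps the set of vertices whose first `2m` coordinates vanish onto itself. -/
theorem statement17 (m n'' : ℕ) (φ : DoobV m 0 n'' ≃ DoobV m 0 n'')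
    (hφ : ∀ x y : DoobV m 0 n'', IsWeightOne (x - y) ↔ IsWeightOne (φ x - φ y))
    (h0 : φ 0 = 0) :
    φ '' {v : DoobV m 0 n'' | v.1 = 0} = {v : DoobV m 0 n'' | v.1 = 0} := by
  have hφ' : ∀ x y : DoobV m 0 n'',
      IsWeightOne (x - y) ↔ IsWeightOne (φ.symm x - φ.symm y) := by
    intro x y
    have := hφ (φ.symm x) (φ.symm y)
    simpa using this.symm
  have hsymm0 : φ.symm 0 = 0 := (Equiv.symm_apply_eq φ).2 h0.symm
  have iff0 : ∀ v : DoobV m 0 n'', v.1 = 0 ↔ (φ v).1 = 0 := by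
    intro v
    constructor
    · intro hv
      have h1 : Relation.ReflTransGen S17.R 0 v := S17.reach hv
      have h2 : Relation.ReflTransGen S17.R (φ 0) (φ v) :=
        Relation.ReflTransGen.lift φ (fun a b h => S17.R_map φ hφ h) _ _ h1
      rw [h0] at h2
      exact S17.rtg_fst h2
    · intro hv
      have h1 : Relation.ReflTransGen S17.R 0 (φ v) := S17.reach hv
      have h2 : Relation.ReflTransGen S17.R (φ.symm 0) (φ.symm (φ v)) :=
        Relation.ReflTransGen.lift φ.symm (fun a b h => S17.R_map φ.symm hφ' h) _ _ h1
      rw [hsymm0, Equiv.symm_apply_apply] at h2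
      exact S17.rtg_fst h2
  ext v
  simp only [Set.mem_image, Set.mem_setOf_eq]
  constructor
  · rintro ⟨u, hu, rfl⟩
    exact (iff0 u).1 hu
  · intro hv
    refine ⟨φ.symm v, ?_, φ.apply_symm_apply v⟩
    rw [iff0 (φ.symm v), Equiv.apply_symm_apply]
    exact hv
end

section
/- For every even integer Γ ≥ 2, the set of nonzero elements of the group (ℤ/2)^Γ can be partitioned into (2^Γ − 1)/3 three-element subsets {a, b, c} such that a + b + c = 0. -/
open Finset

/-- for every even `Γ ≥ 2`, the nonzero elements of `(ℤ/2)^Γ` can be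
partitioned into `(2^Γ - 1)/3` three-element subsets `{a, b, c}` with `a + b + c = 0`. -/
theorem statement18 (Γ : ℕ) (hΓ : Even Γ) (h2 : 2 ≤ Γ) :
    ∃ P : Finset (Finset (Fin Γ → ZMod 2)),
      P.card = (2^Γ - 1) / 3 ∧
      (∀ s ∈ P, s.card = 3 ∧ ∑ x ∈ s, x = 0) ∧
      (∀ s ∈ P, ∀ x ∈ s, x ≠ 0) ∧
      (∀ x : Fin Γ → ZMod 2, x ≠ 0 → ∃! s, s ∈ P ∧ x ∈ s) := by
  classical
  have hΓ0 : Γ ≠ 0 := by omega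
  set F := GaloisField 2 Γ with hF
  haveI : Fintype F := Fintype.ofFinite F
  have hcardF : Nat.card F = 2 ^ Γ := GaloisField.card 2 Γ hΓ0
  -- 3 divides 2^Γ - 1
  have h3 : 3 ∣ 2 ^ Γ - 1 := by
    obtain ⟨k, rfl⟩ := hΓ
    have hm : (2:ℕ) ^ (k + k) = 4 ^ k := by
      rw [← two_mul, pow_mul]; norm_num
    have h4 : (4:ℕ) ^ k % 3 = 1 := by
      rw [Nat.pow_mod]; norm_num
    have h1 : 1 ≤ (4:ℕ) ^ k := Nat.one_le_pow _ _ (by norm_num)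
    rw [hm]; omega
  -- an element ω of order 3
  have h3u : 3 ∣ Nat.card Fˣ := by
    rw [Nat.card_units, hcardF]; exact h3
  obtain ⟨ζ, hζ⟩ := exists_prime_orderOf_dvd_card' (G := Fˣ) 3 h3u
  set ω : F := (ζ : F) with hωdef
  have hω3 : ω ^ 3 = 1 := by
    have h : ζ ^ 3 = 1 := by rw [← hζ]; exact pow_orderOf_eq_one ζ
    have := congrArg (Units.val) h
    push_cast at this
    exact this
  have hω1 : ω ≠ 1 := by
    intro h
    have h' : ζ = 1 := Units.ext (by rw [Units.val_one]; exact h)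
    rw [h'] at hζ; simp at hζ
  have hω0 : ω ≠ 0 := ζ.ne_zero
  have hω2 : ω ^ 2 ≠ 1 := by
    intro h
    apply hω1
    have h' : ω ^ 3 = ω := by rw [pow_succ, h, one_mul]
    rw [hω3] at h'; exact h'.symm
  have hωω2 : ω ≠ ω ^ 2 := by
    intro h
    apply hω1
    have h' : ω * 1 = ω * ω := by rw [mul_one, ← sq, ← h]
    exact (mul_left_cancel₀ hω0 h').symm
  have hsum : 1 + ω + ω ^ 2 = 0 := by
    have hfac : (ω - 1) * (1 + ω + ω ^ 2) = ω ^ 3 - 1 := by ring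
    rw [hω3, sub_self] at hfac
    rcases mul_eq_zero.mp hfac with h | h
    · exact absurd (sub_eq_zero.mp h) hω1
    · exact h
  -- the triple map
  set T : F → Finset F := fun x => {x, ω * x, ω ^ 2 * x} with hT
  have hTmem : ∀ x, x ∈ T x := fun x => by simp [hT]
  have hne : ∀ x : F, x ≠ 0 → ω * x ≠ x ∧ ω ^ 2 * x ≠ x ∧ ω ^ 2 * x ≠ ω * x := by
    intro x hx
    refine ⟨fun h => hω1 ?_, fun h => hω2 ?_, fun h => hωω2 ?_⟩
    · exact mul_right_cancel₀ hx (by rw [h, one_mul])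
    · exact mul_right_cancel₀ hx (by rw [h, one_mul])
    · exact (mul_right_cancel₀ hx h).symm
  have hTcard : ∀ x : F, x ≠ 0 → (T x).card = 3 := by
    intro x hx
    obtain ⟨h1, h2, h3'⟩ := hne x hx
    rw [hT]
    rw [card_insert_of_notMem (by simp [h1.symm, h2.symm, Ne.symm]),
        card_insert_of_notMem (by simp [h3'.symm, Ne.symm]), card_singleton]
  have hTsum : ∀ x : F, x ≠ 0 → ∑ y ∈ T x, y = 0 := by
    intro x hx
    obtain ⟨h1, h2, h3'⟩ := hne x hx
    rw [hT]
    rw [sum_insert (by simp [h1.symm, h2.symm, Ne.symm]),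
        sum_insert (by simp [h3'.symm, Ne.symm]), sum_singleton]
    have h' : x + (ω * x + ω ^ 2 * x) = (1 + ω + ω ^ 2) * x := by ring
    rw [h', hsum, zero_mul]
  have hTnz : ∀ x : F, x ≠ 0 → ∀ y ∈ T x, y ≠ 0 := by
    intro x hx y hy
    simp only [hT, mem_insert, mem_singleton] at hy
    rcases hy with rfl | rfl | rfl
    · exact hx
    · exact mul_ne_zero hω0 hx
    · exact mul_ne_zero (pow_ne_zero 2 hω0) hx
  -- orbit property
  have hTω : ∀ x : F, T (ω * x) = T x := by
    intro x
    have e1 : ω * (ω * x) = ω ^ 2 * x := by ring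
    have e2 : ω ^ 2 * (ω * x) = x := by
      calc ω ^ 2 * (ω * x) = ω ^ 3 * x := by ring
      _ = x := by rw [hω3, one_mul]
    ext y
    simp only [hT, mem_insert, mem_singleton, e1, e2]
    tauto
  have hTω2 : ∀ x : F, T (ω ^ 2 * x) = T x := by
    intro x
    have e1 : ω * (ω ^ 2 * x) = x := by
      calc ω * (ω ^ 2 * x) = ω ^ 3 * x := by ring
      _ = x := by rw [hω3, one_mul]
    have e2 : ω ^ 2 * (ω ^ 2 * x) = ω * x := by
      calc ω ^ 2 * (ω ^ 2 * x) = ω ^ 3 * (ω * x) := by ring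
      _ = ω * x := by rw [hω3, one_mul]
    ext y
    simp only [hT, mem_insert, mem_singleton, e1, e2]
    exact or_rotate
  have hkey : ∀ x y : F, y ∈ T x → T y = T x := by
    intro x y hy
    simp only [hT, mem_insert, mem_singleton] at hy
    rcases hy with rfl | rfl | rfl
    · rfl
    · exact hTω x
    · exact hTω2 x
  -- the partition of F \ {0}
  set P : Finset (Finset F) := (Finset.univ.erase (0:F)).image T with hP
  have hmemP : ∀ s ∈ P, ∃ x : F, x ≠ 0 ∧ T x = s := by
    intro s hs
    simp only [hP, mem_image, mem_erase, mem_univ, and_true] at hs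
    obtain ⟨x, hx, hxs⟩ := hs
    exact ⟨x, hx, hxs⟩
  have hPmem : ∀ x : F, x ≠ 0 → T x ∈ P := by
    intro x hx
    simp only [hP, mem_image, mem_erase, mem_univ, and_true]
    exact ⟨x, hx, rfl⟩
  have hPnz : ∀ s ∈ P, ∀ y ∈ s, y ≠ 0 := by
    intro s hs y hy
    obtain ⟨x, hx, rfl⟩ := hmemP s hs
    exact hTnz x hx y hy
  have hPuniq : ∀ x : F, x ≠ 0 → ∃! s, s ∈ P ∧ x ∈ s := by
    intro x hx
    refine ⟨T x, ⟨hPmem x hx, hTmem x⟩, ?_⟩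
    rintro s ⟨hs, hxs⟩
    obtain ⟨y, hy, rfl⟩ := hmemP s hs
    exact (hkey y x hxs).symm ▸ (hkey y x hxs) ▸ rfl
  -- compute card of P
  have hbiUnion : P.biUnion id = Finset.univ.erase (0:F) := by
    ext x
    simp only [mem_biUnion, id, mem_erase, mem_univ, and_true]
    constructor
    · rintro ⟨s, hs, hxs⟩; exact hPnz s hs x hxs
    · intro hx; exact ⟨T x, hPmem x hx, hTmem x⟩
  have hdisj : ∀ s ∈ P, ∀ t ∈ P, s ≠ t → Disjoint (id s) (id t) := by
    intro s hs t ht hst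
    rw [Finset.disjoint_left]
    intro x hxs hxt
    obtain ⟨y, hy, rfl⟩ := hmemP s hs
    obtain ⟨z, hz, rfl⟩ := hmemP t ht
    exact hst ((hkey y x hxs).symm.trans (hkey z x hxt))
  have hcard3 : 3 * P.card = 2 ^ Γ - 1 := by
    have h1 : (P.biUnion id).card = ∑ s ∈ P, s.card := Finset.card_biUnion hdisj
    rw [hbiUnion] at h1
    have h2 : (Finset.univ.erase (0:F)).card = 2 ^ Γ - 1 := by
      rw [Finset.card_erase_of_mem (mem_univ _), Finset.card_univ,
        ← Nat.card_eq_fintype_card, hcardF]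
    have h3' : ∑ s ∈ P, s.card = 3 * P.card := by
      have hc : ∀ s ∈ P, s.card = 3 := fun s hs => by
        obtain ⟨x, hx, rfl⟩ := hmemP s hs; exact hTcard x hx
      rw [Finset.sum_congr rfl hc, Finset.sum_const, smul_eq_mul, mul_comm]
    omega
  have hPcard : P.card = (2 ^ Γ - 1) / 3 := by omega
  -- transfer along a linear equivalence
  haveI : Module.Finite (ZMod 2) F := Module.Finite.of_finite
  have hfr : Module.finrank (ZMod 2) F = Module.finrank (ZMod 2) (Fin Γ → ZMod 2) := by
    rw [GaloisField.finrank 2 hΓ0, Module.finrank_fin_fun]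
  obtain ⟨e⟩ := FiniteDimensional.nonempty_linearEquiv_of_finrank_eq hfr
  have einj : Function.Injective (e : F → (Fin Γ → ZMod 2)) := e.injective
  refine ⟨P.image (fun s => s.image e), ?_, ?_, ?_, ?_⟩
  · rw [Finset.card_image_of_injective _ (Finset.image_injective einj), hPcard]
  · intro s' hs'
    obtain ⟨s, hs, rfl⟩ := Finset.mem_image.mp hs'
    obtain ⟨x, hx, rfl⟩ := hmemP s hs
    constructor
    · rw [Finset.card_image_of_injective _ einj]; exact hTcard x hx
    · rw [Finset.sum_image (fun a _ b _ h => einj h), ← map_sum, hTsum x hx, map_zero]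
  · intro s' hs' y hy
    obtain ⟨s, hs, rfl⟩ := Finset.mem_image.mp hs'
    obtain ⟨x, hxs, rfl⟩ := Finset.mem_image.mp hy
    intro h
    exact hPnz s hs x hxs (einj (by rw [h, map_zero]))
  · intro y hy
    have hx : e.symm y ≠ 0 := by
      intro h
      apply hy
      rw [← e.apply_symm_apply y, h, map_zero]
    obtain ⟨s, ⟨hsP, hxs⟩, huniq⟩ := hPuniq (e.symm y) hx
    refine ⟨s.image e, ⟨Finset.mem_image_of_mem _ hsP, ?_⟩, ?_⟩
    · rw [← e.apply_symm_apply y]; exact Finset.mem_image_of_mem _ hxs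
    · rintro t' ⟨ht', hyt'⟩
      obtain ⟨t, ht, rfl⟩ := Finset.mem_image.mp ht'
      obtain ⟨z, hzt, hzy⟩ := Finset.mem_image.mp hyt'
      have : z = e.symm y := by rw [← hzy, e.symm_apply_apply]
      rw [huniq t ⟨ht, this ▸ hzt⟩]
end
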